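/- Let α be a compactly supported centered Borel probability measure on ℝ^D, β a compactly supported centered Borel probability measure on ℝ^E, and ε > 0. Define D_ε(Γ) = ‖Γ‖_F² + (1/8)·OT_ε^Γ(α,β). Let (Γ_t)_{t≥0} be a sequence in ℝ^{D×E} such that for every t there is π_{t+1} ∈ Π(α,β) attaining the infimum defining OT_ε^{Γ_t}(α,β) with Γ_{t+1} = ∫ x yᵀ dπ_{t+1}(x,y). Then for every t ≥ 1, Σ_{k=0}^{t−1} ‖Γ_k − Γ_{k+1}‖_F² ≤ D_ε(Γ_0) − D_ε(Γ_t); moreover, if D_ε is bounded below on ℝ^{D×E}, then ‖Γ_t − Γ_{t+1}‖_F → 0 as t → ∞. -/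

import Mathlib

/-!
The cost is affine in `Γ`: `∫ c_Γ dπ = -16 ⟨Γ, M π⟩_F - 4 ∫ ‖x‖² ‖y‖² dπ` with `M π = ∫ x yᵀ dπ`.
The plan `π_{t+1}`, optimal for `Γ_t`, is admissible for `Γ_{t+1} = M π_{t+1}`, and the entropic
terms of the two objectives coincide, so
`D_ε(Γ_{t+1}) ≤ D_ε(Γ_t) + ‖Γ_{t+1}‖² - ‖Γ_t‖² - 2 ⟨Γ_{t+1} - Γ_t, Γ_{t+1}⟩_F`
`= D_ε(Γ_t) - ‖Γ_t - Γ_{t+1}‖²`. Telescoping gives the bound on the partial sums, and a lower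
bound on `D_ε` makes the series of squared increments summable.
-/

open MeasureTheory Classical Filter

/-- Kullback–Leibler divergence, with value `⊤` when `π` is not absolutely continuous
with respect to `μ` or the log-likelihood ratio is not integrable. -/
noncomputable def klE {Z : Type*} [MeasurableSpace Z] (π μ : Measure Z) : EReal :=
  if π ≪ μ ∧ Integrable (llr π μ) π then ((∫ z, llr π μ z ∂π : ℝ) : EReal) else ⊤

/-- The set of couplings between `α` and `β`. -/
def couplings {X Y : Type*} [MeasurableSpace X] [MeasurableSpace Y]
    (α : Measure X) (β : Measure Y) : Set (Measure (X × Y)) :=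
  {π | π.map Prod.fst = α ∧ π.map Prod.snd = β}

/-- The entropic OT cost `OT_ε^Γ(α,β)` for the cost
`c_Γ(x,y) = -16 ⟨Γ, x yᵀ⟩_F - 4 ‖x‖² ‖y‖²`. -/
noncomputable def otGammaM {D E : ℕ}
    (α : Measure (EuclideanSpace ℝ (Fin D))) (β : Measure (EuclideanSpace ℝ (Fin E)))
    (ε : ℝ) (Γ : Matrix (Fin D) (Fin E) ℝ) : EReal :=
  ⨅ π ∈ couplings α β,
    ((∫ p, (-16 * ∑ i, ∑ j, Γ i j * (p.1 i * p.2 j)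
        - 4 * ‖p.1‖ ^ 2 * ‖p.2‖ ^ 2) ∂π : ℝ) : EReal)
      + (ε : EReal) * klE π (α.prod β)

/-- The dual function `D_ε(Γ) = ‖Γ‖_F² + (1/8) OT_ε^Γ(α,β)`. -/
noncomputable def dualFun {D E : ℕ}
    (α : Measure (EuclideanSpace ℝ (Fin D))) (β : Measure (EuclideanSpace ℝ (Fin E)))
    (ε : ℝ) (Γ : Matrix (Fin D) (Fin E) ℝ) : ℝ :=
  (∑ i, ∑ j, (Γ i j) ^ 2) + (1 / 8) * (otGammaM α β ε Γ).toReal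


lemma klE_self {Z : Type*} [MeasurableSpace Z] (μ : Measure Z) [SigmaFinite μ] :
    klE μ μ = 0 := by
  have hllr : llr μ μ =ᵐ[μ] 0 := by
    filter_upwards [μ.rnDeriv_self] with z hz
    simp [llr, hz]
  rw [klE, if_pos ⟨Measure.AbsolutelyContinuous.rfl,
      (integrable_congr hllr).2 (integrable_zero _ _ _)⟩,
    integral_congr_ae hllr]
  simp

lemma klE_ne_bot {Z : Type*} [MeasurableSpace Z] (π μ : Measure Z) : klE π μ ≠ ⊥ := by
  rw [klE]
  split <;> simp

lemma Continuous.integrable_of_ae_mem_isCompact {X F : Type*} [MeasurableSpace X]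
    [TopologicalSpace X] [OpensMeasurableSpace X] [T2Space X] [NormedAddCommGroup F]
    {μ : Measure X} [IsFiniteMeasure μ] {K : Set X} {f : X → F} (hf : Continuous f)
    (hK : IsCompact K) (hμK : ∀ᵐ x ∂μ, x ∈ K) : Integrable f μ := by
  rw [← Measure.restrict_eq_self_of_ae_mem hμK]
  exact hf.continuousOn.integrableOn_compact hK

lemma sum_range_le_sub_of_le_sub_succ {a f : ℕ → ℝ} (haf : ∀ n, a n ≤ f n - f (n + 1)) (n : ℕ) :
    ∑ k ∈ Finset.range n, a k ≤ f 0 - f n :=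
  (Finset.sum_le_sum fun k _ => haf k).trans_eq (Finset.sum_range_sub' f n)

lemma tendsto_zero_of_le_sub_succ {a f : ℕ → ℝ} {m : ℝ} (ha : ∀ n, 0 ≤ a n)
    (haf : ∀ n, a n ≤ f n - f (n + 1)) (hm : ∀ n, m ≤ f n) : Tendsto a atTop (nhds 0) :=
  (summable_of_sum_range_le (c := f 0 - m) ha fun n =>
    (sum_range_le_sub_of_le_sub_succ haf n).trans (by linarith [hm n])).tendsto_atTop_zero

section Couplings

variable {X Y : Type*} [MeasurableSpace X] [MeasurableSpace Y] {α : Measure X} {β : Measure Y}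
  {π : Measure (X × Y)}

lemma prod_mem_couplings [IsProbabilityMeasure α] [IsProbabilityMeasure β] :
    α.prod β ∈ couplings α β :=
  ⟨Measure.fst_prod, Measure.snd_prod⟩

lemma isProbabilityMeasure_of_mem_couplings [IsProbabilityMeasure α] (hπ : π ∈ couplings α β) :
    IsProbabilityMeasure π := by
  constructor
  rw [← Set.preimage_univ (f := Prod.fst), ← Measure.map_apply measurable_fst MeasurableSet.univ,
    hπ.1, measure_univ]

lemma ae_mem_prod_of_mem_couplings (hπ : π ∈ couplings α β) {s : Set X} {t : Set Y}
    (hs : ∀ᵐ x ∂α, x ∈ s) (ht : ∀ᵐ y ∂β, y ∈ t) : ∀ᵐ p ∂π, p ∈ s ×ˢ t := by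
  rw [← hπ.1] at hs
  rw [← hπ.2] at ht
  filter_upwards [ae_of_ae_map measurable_fst.aemeasurable hs,
    ae_of_ae_map measurable_snd.aemeasurable ht] with p hp₁ hp₂
  exact ⟨hp₁, hp₂⟩

end Couplings

section EntropicOT

variable {D E : ℕ} {α : Measure (EuclideanSpace ℝ (Fin D))} {β : Measure (EuclideanSpace ℝ (Fin E))}
  {ε : ℝ} {π : Measure (EuclideanSpace ℝ (Fin D) × EuclideanSpace ℝ (Fin E))}

noncomputable def entropicCost (Γ : Matrix (Fin D) (Fin E) ℝ)
    (p : EuclideanSpace ℝ (Fin D) × EuclideanSpace ℝ (Fin E)) : ℝ :=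
  -16 * ∑ i, ∑ j, Γ i j * (p.1 i * p.2 j) - 4 * ‖p.1‖ ^ 2 * ‖p.2‖ ^ 2

noncomputable def crossMoment (π : Measure (EuclideanSpace ℝ (Fin D) × EuclideanSpace ℝ (Fin E))) :
    Matrix (Fin D) (Fin E) ℝ :=
  Matrix.of fun i j => ∫ p, p.1 i * p.2 j ∂π

variable (α β ε) in
noncomputable def entropicObjective (Γ : Matrix (Fin D) (Fin E) ℝ)
    (π : Measure (EuclideanSpace ℝ (Fin D) × EuclideanSpace ℝ (Fin E))) : EReal :=
  ((∫ p, entropicCost Γ p ∂π : ℝ) : EReal) + (ε : EReal) * klE π (α.prod β)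

lemma continuous_entropicCost (Γ : Matrix (Fin D) (Fin E) ℝ) : Continuous (entropicCost Γ) := by
  unfold entropicCost
  fun_prop

lemma entropicCost_sub_entropicCost (A B : Matrix (Fin D) (Fin E) ℝ)
    (p : EuclideanSpace ℝ (Fin D) × EuclideanSpace ℝ (Fin E)) :
    entropicCost A p - entropicCost B p = 16 * ∑ i, ∑ j, (B i j - A i j) * (p.1 i * p.2 j) := by
  simp only [entropicCost, sub_mul, Finset.sum_sub_distrib]
  ring

lemma integral_entropicCost_sub [IsFiniteMeasure π]
    {K : Set (EuclideanSpace ℝ (Fin D) × EuclideanSpace ℝ (Fin E))} (hK : IsCompact K)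
    (hπK : ∀ᵐ p ∂π, p ∈ K) (A B : Matrix (Fin D) (Fin E) ℝ) :
    ∫ p, entropicCost A p ∂π - ∫ p, entropicCost B p ∂π
      = 16 * ∑ i, ∑ j, (B i j - A i j) * crossMoment π i j := by
  have hint {f : EuclideanSpace ℝ (Fin D) × EuclideanSpace ℝ (Fin E) → ℝ} (hf : Continuous f) :
      Integrable f π :=
    hf.integrable_of_ae_mem_isCompact hK hπK
  have hmonomial (i : Fin D) (j : Fin E) : Integrable (fun p => p.1 i * p.2 j) π :=
    hint (by fun_prop)
  rw [← integral_sub (hint (continuous_entropicCost A)) (hint (continuous_entropicCost B))]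
  simp_rw [entropicCost_sub_entropicCost]
  rw [integral_const_mul, integral_finsetSum _ fun i _ =>
    integrable_finsetSum _ fun j _ => (hmonomial i j).const_mul _]
  congr 1
  refine Finset.sum_congr rfl fun i _ => ?_
  rw [integral_finsetSum _ fun j _ => (hmonomial i j).const_mul _]
  exact Finset.sum_congr rfl fun j _ => integral_const_mul _ _

lemma otGammaM_le_entropicObjective (hπ : π ∈ couplings α β) (Γ : Matrix (Fin D) (Fin E) ℝ) :
    otGammaM α β ε Γ ≤ entropicObjective α β ε Γ π :=
  iInf₂_le π hπ

variable [IsProbabilityMeasure α] [IsProbabilityMeasure β]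

variable (α β ε) in
lemma otGammaM_ne_top (Γ : Matrix (Fin D) (Fin E) ℝ) : otGammaM α β ε Γ ≠ ⊤ := by
  refine ne_top_of_le_ne_top ?_ (otGammaM_le_entropicObjective prod_mem_couplings Γ)
  simp [entropicObjective, klE_self]

lemma exists_klE_eq_coe_of_optimal (hε : 0 < ε) {Γ : Matrix (Fin D) (Fin E) ℝ}
    (hopt : entropicObjective α β ε Γ π = otGammaM α β ε Γ) :
    ∃ κ : ℝ, klE π (α.prod β) = κ := by
  refine ⟨_, (EReal.coe_toReal (fun htop => otGammaM_ne_top α β ε Γ ?_) (klE_ne_bot _ _)).symm⟩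
  rw [← hopt, entropicObjective, htop, EReal.mul_top_of_pos (by exact_mod_cast hε),
    EReal.add_top_of_ne_bot (EReal.coe_ne_bot _)]

lemma otGammaM_ne_bot_of_optimal (hε : 0 < ε) {Γ : Matrix (Fin D) (Fin E) ℝ}
    (hopt : entropicObjective α β ε Γ π = otGammaM α β ε Γ) : otGammaM α β ε Γ ≠ ⊥ := by
  obtain ⟨κ, hκ⟩ := exists_klE_eq_coe_of_optimal hε hopt
  rw [← hopt, entropicObjective, hκ, ← EReal.coe_mul, ← EReal.coe_add]
  exact EReal.coe_ne_bot _

/-- The hypothesis `otGammaM α β ε B ≠ ⊥` is there because `EReal.toReal ⊥ = 0`. -/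
lemma dualFun_add_sq_le_of_optimal (hε : 0 < ε) {A B : Matrix (Fin D) (Fin E) ℝ}
    (hπ : π ∈ couplings α β) (hopt : entropicObjective α β ε A π = otGammaM α β ε A)
    {K : Set (EuclideanSpace ℝ (Fin D) × EuclideanSpace ℝ (Fin E))} (hK : IsCompact K)
    (hπK : ∀ᵐ p ∂π, p ∈ K) (hB : B = crossMoment π) (hB_ne_bot : otGammaM α β ε B ≠ ⊥) :
    dualFun α β ε B + ∑ i, ∑ j, (A i j - B i j) ^ 2 ≤ dualFun α β ε A := by
  have := isProbabilityMeasure_of_mem_couplings hπ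
  obtain ⟨κ, hκ⟩ := exists_klE_eq_coe_of_optimal hε hopt
  have hA : (otGammaM α β ε A).toReal = ∫ p, entropicCost A p ∂π + ε * κ := by
    rw [← hopt, entropicObjective, hκ, ← EReal.coe_mul, ← EReal.coe_add, EReal.toReal_coe]
  have hB_le : (otGammaM α β ε B).toReal ≤ ∫ p, entropicCost B p ∂π + ε * κ := by
    have h := otGammaM_le_entropicObjective (ε := ε) hπ B
    rw [entropicObjective, hκ, ← EReal.coe_mul, ← EReal.coe_add] at h
    exact (EReal.toReal_le_toReal h hB_ne_bot (EReal.coe_ne_top _)).trans_eq (EReal.toReal_coe _)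
  have hcost := integral_entropicCost_sub hK hπK A B
  rw [← hB] at hcost
  have hsq : ∑ i, ∑ j, (A i j - B i j) ^ 2
      = ∑ i, ∑ j, A i j ^ 2 - ∑ i, ∑ j, B i j ^ 2 + 2 * ∑ i, ∑ j, (B i j - A i j) * B i j := by
    simp only [Finset.mul_sum, ← Finset.sum_sub_distrib, ← Finset.sum_add_distrib]
    congr! 2
    ring
  rw [dualFun, dualFun]
  linarith

end EntropicOT

theorem alternating_minimization_convergence_general {D E : ℕ}
    (α : Measure (EuclideanSpace ℝ (Fin D))) (β : Measure (EuclideanSpace ℝ (Fin E)))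
    [IsProbabilityMeasure α] [IsProbabilityMeasure β]
    (KX : Set (EuclideanSpace ℝ (Fin D))) (KY : Set (EuclideanSpace ℝ (Fin E)))
    (hKX : IsCompact KX) (hKY : IsCompact KY) (hαK : α KXᶜ = 0) (hβK : β KYᶜ = 0)
    (ε : ℝ) (hε : 0 < ε)
    (Γs : ℕ → Matrix (Fin D) (Fin E) ℝ)
    (πs : ℕ → Measure (EuclideanSpace ℝ (Fin D) × EuclideanSpace ℝ (Fin E)))
    (hπ : ∀ t : ℕ, πs (t + 1) ∈ couplings α β)
    (hopt : ∀ t : ℕ,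
      ((∫ p, (-16 * ∑ i, ∑ j, (Γs t) i j * (p.1 i * p.2 j)
          - 4 * ‖p.1‖ ^ 2 * ‖p.2‖ ^ 2) ∂(πs (t + 1)) : ℝ) : EReal)
        + (ε : EReal) * klE (πs (t + 1)) (α.prod β) = otGammaM α β ε (Γs t))
    (hΓ : ∀ t : ℕ, Γs (t + 1) = Matrix.of fun i j => ∫ p, p.1 i * p.2 j ∂(πs (t + 1))) :
    (∀ t : ℕ, 1 ≤ t →
        (∑ k ∈ Finset.range t, ∑ i, ∑ j, ((Γs k) i j - (Γs (k + 1)) i j) ^ 2)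
          ≤ dualFun α β ε (Γs 0) - dualFun α β ε (Γs t)) ∧
      ((∃ m : ℝ, ∀ Γ : Matrix (Fin D) (Fin E) ℝ, m ≤ dualFun α β ε Γ) →
        Tendsto
          (fun t => Real.sqrt (∑ i, ∑ j, ((Γs t) i j - (Γs (t + 1)) i j) ^ 2))
          atTop (nhds 0)) := by
  have hsupp : ∀ t, ∀ᵐ p ∂πs (t + 1), p ∈ KX ×ˢ KY := fun t =>
    ae_mem_prod_of_mem_couplings (hπ t) (mem_ae_iff.2 hαK) (mem_ae_iff.2 hβK)
  have hdescent : ∀ t, ∑ i, ∑ j, (Γs t i j - Γs (t + 1) i j) ^ 2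
      ≤ dualFun α β ε (Γs t) - dualFun α β ε (Γs (t + 1)) := fun t => by
    linarith [dualFun_add_sq_le_of_optimal hε (hπ t) (hopt t) (hKX.prod hKY) (hsupp t) (hΓ t)
      (otGammaM_ne_bot_of_optimal hε (hopt (t + 1)))]
  refine ⟨fun t _ => sum_range_le_sub_of_le_sub_succ hdescent t, ?_⟩
  rintro ⟨m, hm⟩
  have hnonneg : ∀ t, 0 ≤ ∑ i, ∑ j, (Γs t i j - Γs (t + 1) i j) ^ 2 := fun t => by positivity
  simpa using (tendsto_zero_of_le_sub_succ hnonneg hdescent fun t => hm (Γs t)).sqrt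

/-- along the alternating-minimization iterates, the sum of squared
Frobenius increments is bounded by the decrease of the dual function; if the dual
function is bounded below, the increments tend to zero. -/
theorem alternating_minimization_convergence {D E : ℕ}
    (α : Measure (EuclideanSpace ℝ (Fin D))) (β : Measure (EuclideanSpace ℝ (Fin E)))
    [IsProbabilityMeasure α] [IsProbabilityMeasure β]
    (KX : Set (EuclideanSpace ℝ (Fin D))) (KY : Set (EuclideanSpace ℝ (Fin E)))
    (hKX : IsCompact KX) (hKY : IsCompact KY) (hαK : α KXᶜ = 0) (hβK : β KYᶜ = 0)
    (hαcentered : ∫ x, x ∂α = 0) (hβcentered : ∫ y, y ∂β = 0)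
    (ε : ℝ) (hε : 0 < ε)
    (Γs : ℕ → Matrix (Fin D) (Fin E) ℝ)
    (πs : ℕ → Measure (EuclideanSpace ℝ (Fin D) × EuclideanSpace ℝ (Fin E)))
    (hπ : ∀ t : ℕ, πs (t + 1) ∈ couplings α β)
    (hopt : ∀ t : ℕ,
      ((∫ p, (-16 * ∑ i, ∑ j, (Γs t) i j * (p.1 i * p.2 j)
          - 4 * ‖p.1‖ ^ 2 * ‖p.2‖ ^ 2) ∂(πs (t + 1)) : ℝ) : EReal)
        + (ε : EReal) * klE (πs (t + 1)) (α.prod β) = otGammaM α β ε (Γs t))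
    (hΓ : ∀ t : ℕ, Γs (t + 1) = Matrix.of fun i j => ∫ p, p.1 i * p.2 j ∂(πs (t + 1))) :
    (∀ t : ℕ, 1 ≤ t →
        (∑ k ∈ Finset.range t, ∑ i, ∑ j, ((Γs k) i j - (Γs (k + 1)) i j) ^ 2)
          ≤ dualFun α β ε (Γs 0) - dualFun α β ε (Γs t)) ∧
      ((∃ m : ℝ, ∀ Γ : Matrix (Fin D) (Fin E) ℝ, m ≤ dualFun α β ε Γ) →
        Tendsto
          (fun t => Real.sqrt (∑ i, ∑ j, ((Γs t) i j - (Γs (t + 1)) i j) ^ 2))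
          atTop (nhds 0)) :=
  alternating_minimization_convergence_general α β KX KY hKX hKY hαK hβK ε hε Γs πs hπ hopt hΓ
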